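/- arXiv:1212.2834 — 2 statements merged into one kernel-verified Lean document; each statement's English description precedes it below -/
import Mathlib

section
/- If Null(Φ) ∩ 𝒦 ∩ 𝒫 = {0}, then the sublevel set {Θ ∈ 𝒦 ∩ 𝒫 : ‖Y − ΦΘ‖_F ≤ ‖Y‖_F} is a compact subset of the space of real n×L matrices. -/
/-- Frobenius norm of a real matrix. -/
noncomputable def frob {a b : ℕ} (A : Matrix (Fin a) (Fin b) ℝ) : ℝ :=
  Real.sqrt (∑ i, ∑ j, (A i j) ^ 2)

/-- The set of a×b matrices whose every column has at most k nonzero entries. -/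
def colSparse (a b k : ℕ) : Set (Matrix (Fin a) (Fin b) ℝ) :=
  {Θ | ∀ l, ({i | Θ i l ≠ 0} : Set (Fin a)).ncard ≤ k}

/-- The set of a×b matrices having at most p nonzero rows. -/
def rowSparse (a b p : ℕ) : Set (Matrix (Fin a) (Fin b) ℝ) :=
  {Θ | ({i | ∃ l, Θ i l ≠ 0} : Set (Fin a)).ncard ≤ p}

/-!
Membership in `𝒦 ∩ 𝒫` only depends on the support and survives shrinking it, so `𝒦 ∩ 𝒫` is the
finite union of the coordinate subspaces of matrices supported in the support of one of its
members. Each such subspace lies in `𝒦 ∩ 𝒫`, hence meets `Null(Φ)` only in `0`, so `Θ ↦ Φ * Θ`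
restricted to it is a closed embedding; the part of the sublevel set in it is then the preimage
of the compact ball `‖Z - Y‖_F ≤ ‖Y‖_F`.
-/

open Function

section ClosedEmbedding

variable {𝕜 E F : Type*} [NontriviallyNormedField 𝕜] [CompleteSpace 𝕜]
  [AddCommGroup E] [TopologicalSpace E] [IsTopologicalAddGroup E] [Module 𝕜 E]
  [ContinuousSMul 𝕜 E] [T2Space E]
  [AddCommGroup F] [TopologicalSpace F] [IsTopologicalAddGroup F] [Module 𝕜 F]
  [ContinuousSMul 𝕜 F] [T2Space F]

theorem Submodule.isCompact_inter_preimage_of_disjoint_ker (f : E →ₗ[𝕜] F)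
    (V : Submodule 𝕜 E) [FiniteDimensional 𝕜 V] (hV : Disjoint V (LinearMap.ker f))
    {K : Set F} (hK : IsCompact K) : IsCompact ((V : Set E) ∩ f ⁻¹' K) := by
  have hker : LinearMap.ker (f ∘ₗ V.subtype) = ⊥ := by
    rw [LinearMap.ker_comp, ← Submodule.disjoint_iff_comap_eq_bot]
    exact hV
  rw [← Subtype.image_preimage_coe]
  exact ((LinearMap.isClosedEmbedding_of_injective hker).isCompact_preimage hK).image
    continuous_subtype_val

end ClosedEmbedding

def Matrix.supportedOn {m n : Type*} (R : Type*) [Semiring R] (S : Set (m × n)) :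
    Submodule R (Matrix m n R) where
  carrier := {Θ | ∀ i j, Θ i j ≠ 0 → (i, j) ∈ S}
  add_mem' := by
    intro A B hA hB i j hAB
    by_cases hA0 : A i j = 0
    · exact hB i j (by simpa [hA0] using hAB)
    · exact hA i j hA0
  zero_mem' := by simp
  smul_mem' := by
    intro c A hA i j hcA
    exact hA i j (right_ne_zero_of_mul hcA)

section Sparse

variable {a b k p : ℕ} {Θ Θ' : Matrix (Fin a) (Fin b) ℝ}

theorem mem_colSparse_of_ne_zero_imp (h : ∀ i j, Θ' i j ≠ 0 → Θ i j ≠ 0)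
    (hΘ : Θ ∈ colSparse a b k) : Θ' ∈ colSparse a b k := fun l =>
  (Set.ncard_le_ncard (fun i => h i l) (Set.toFinite _)).trans (hΘ l)

theorem mem_rowSparse_of_ne_zero_imp (h : ∀ i j, Θ' i j ≠ 0 → Θ i j ≠ 0)
    (hΘ : Θ ∈ rowSparse a b p) : Θ' ∈ rowSparse a b p :=
  (Set.ncard_le_ncard (fun i hi => hi.imp (h i)) (Set.toFinite _)).trans hΘ

theorem supportedOn_support_subset_sparse (hΘ : Θ ∈ colSparse a b k ∩ rowSparse a b p) :
    (Matrix.supportedOn ℝ (support (uncurry Θ)) : Set (Matrix (Fin a) (Fin b) ℝ)) ⊆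
      colSparse a b k ∩ rowSparse a b p := fun _ hΘ' =>
  ⟨mem_colSparse_of_ne_zero_imp hΘ' hΘ.1, mem_rowSparse_of_ne_zero_imp hΘ' hΘ.2⟩

theorem sparse_eq_biUnion_supportedOn :
    colSparse a b k ∩ rowSparse a b p = ⋃ S ∈ (fun Θ => support (uncurry Θ)) ''
      (colSparse a b k ∩ rowSparse a b p), (Matrix.supportedOn ℝ S : Set _) := by
  refine subset_antisymm (fun Θ hΘ => ?_) ?_
  · exact Set.mem_biUnion (Set.mem_image_of_mem _ hΘ) fun i j h => h
  · simp only [Set.biUnion_image, Set.iUnion₂_subset_iff]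
    exact fun Θ hΘ => supportedOn_support_subset_sparse hΘ

end Sparse

section Frobenius

attribute [local instance] Matrix.frobeniusNormedAddCommGroup Matrix.frobeniusNormedSpace

theorem frob_eq_frobenius_norm {a b : ℕ} (A : Matrix (Fin a) (Fin b) ℝ) : frob A = ‖A‖ := by
  simp only [frob, Matrix.frobenius_norm_def, Real.norm_eq_abs, ← Real.sqrt_eq_rpow,
    Real.rpow_two, sq_abs]

theorem isCompact_setOf_frob_sub_le {a b : ℕ} (Y : Matrix (Fin a) (Fin b) ℝ) (r : ℝ) :
    IsCompact {Z | frob (Y - Z) ≤ r} := by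
  simp only [frob_eq_frobenius_norm, norm_sub_rev Y, ← dist_eq_norm]
  exact isCompact_closedBall Y r

end Frobenius

theorem stmt_16_general (m n L k p : ℕ)
    (Φ : Matrix (Fin m) (Fin n) ℝ) (Y : Matrix (Fin m) (Fin L) ℝ)
    (hnull : {Θ : Matrix (Fin n) (Fin L) ℝ | Φ * Θ = 0} ∩ colSparse n L k ∩ rowSparse n L p
      = {0}) :
    IsCompact {Θ : Matrix (Fin n) (Fin L) ℝ |
      Θ ∈ colSparse n L k ∩ rowSparse n L p ∧ frob (Y - Φ * Θ) ≤ frob Y} := by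
  let f := mulLeftLinearMap (Fin L) ℝ Φ
  have hpiece : ∀ S ∈ (fun Θ => support (uncurry Θ)) ''
      (colSparse n L k ∩ rowSparse n L p),
      IsCompact ((Matrix.supportedOn ℝ S : Set _) ∩ f ⁻¹' {Z | frob (Y - Z) ≤ frob Y}) := by
    rintro _ ⟨Θ, hΘ, rfl⟩
    refine Submodule.isCompact_inter_preimage_of_disjoint_ker f _ ?_
      (isCompact_setOf_frob_sub_le Y _)
    refine Submodule.disjoint_def.2 fun Θ' hΘ' hΦΘ' => ?_
    have hsparse := supportedOn_support_subset_sparse hΘ hΘ'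
    exact hnull.subset ⟨⟨hΦΘ', hsparse.1⟩, hsparse.2⟩
  convert (Set.toFinite _).isCompact_biUnion hpiece using 1
  rw [Set.ofPred_and, Set.ofPred_mem_eq]
  conv_lhs => rw [sparse_eq_biUnion_supportedOn]
  rw [Set.iUnion₂_inter]
  rfl

theorem stmt_16 (m n L k p : ℕ) (hm : 0 < m) (hn : 0 < n) (hL : 0 < L)
    (hk : 0 < k) (hp : 0 < p)
    (Φ : Matrix (Fin m) (Fin n) ℝ) (Y : Matrix (Fin m) (Fin L) ℝ)
    (hnull : {Θ : Matrix (Fin n) (Fin L) ℝ | Φ * Θ = 0} ∩ colSparse n L k ∩ rowSparse n L p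
      = {0}) :
    IsCompact {Θ : Matrix (Fin n) (Fin L) ℝ |
      Θ ∈ colSparse n L k ∩ rowSparse n L p ∧ frob (Y - Φ * Θ) ≤ frob Y} :=
  stmt_16_general m n L k p Φ Y hnull
end

section
/- Let X ∈ 𝒦 ∩ 𝒫 satisfy ‖Y − ΦX‖_F ≤ ‖Y‖_F, and let X_R denote the orthogonal projection (with respect to the Frobenius inner product) of X onto the orthogonal complement of Null(Φ) in ℝ^{n×L}. Then ‖X_R‖_F ≤ 2·σ_min⁻¹·‖Y‖_F, where σ_min is the smallest nonzero singular value of Φ. -/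
open Matrix

section EigenExpansion

variable {ι : Type*} [Fintype ι]

lemma OrthonormalBasis.dotProduct_self_eq_sum (b : OrthonormalBasis ι ℝ (EuclideanSpace ℝ ι))
    (x : ι → ℝ) : x ⬝ᵥ x = ∑ i, (b i ⬝ᵥ x) ^ 2 := by
  have := b.sum_inner_mul_inner (WithLp.toLp 2 x) (WithLp.toLp 2 x)
  simp only [EuclideanSpace.inner_eq_star_dotProduct, star_trivial] at this
  simpa [sq, dotProduct_comm] using this.symm

variable [DecidableEq ι] {A : Matrix ι ι ℝ}

lemma Matrix.IsHermitian.mem_range_eigenvalues_of_mulVec_eq_smul (hA : A.IsHermitian)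
    {v : ι → ℝ} {t : ℝ} (hv : v ≠ 0) (h : A *ᵥ v = t • v) : t ∈ Set.range hA.eigenvalues := by
  rw [← hA.spectrum_real_eq_range_eigenvalues, ← Matrix.spectrum_toLin']
  exact (Module.End.hasEigenvalue_of_hasEigenvector
    (Module.End.hasEigenvector_iff.mpr ⟨by simpa using h, hv⟩)).mem_spectrum

lemma Matrix.IsHermitian.dotProduct_mulVec_self_eq_sum (hA : A.IsHermitian) (x : ι → ℝ) :
    x ⬝ᵥ (A *ᵥ x) = ∑ i, hA.eigenvalues i * (hA.eigenvectorBasis i ⬝ᵥ x) ^ 2 := by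
  have hAT : Aᵀ = A := (conjTranspose_eq_transpose_of_trivial A).symm.trans hA.eq
  have := hA.eigenvectorBasis.sum_inner_mul_inner (WithLp.toLp 2 x) (WithLp.toLp 2 (A *ᵥ x))
  simp only [EuclideanSpace.inner_eq_star_dotProduct, star_trivial] at this
  rw [dotProduct_comm, ← this]
  refine Finset.sum_congr rfl fun i _ => ?_
  rw [dotProduct_comm (A *ᵥ x), dotProduct_mulVec, ← mulVec_transpose, hAT,
    hA.mulVec_eigenvectorBasis, smul_dotProduct, smul_eq_mul]
  ring

end EigenExpansion

lemma transpose_dotProduct_eq_zero_of_trace_mul_eq_zero {ι κ ν : Type*} [Fintype ι] [Fintype ν]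
    [DecidableEq ν] {Φ : Matrix κ ι ℝ} {A : Matrix ι ν ℝ}
    (hA : ∀ W : Matrix ι ν ℝ, Φ * W = 0 → trace (Aᵀ * W) = 0) (l : ν) {v : ι → ℝ}
    (hv : Φ *ᵥ v = 0) : Aᵀ l ⬝ᵥ v = 0 := by
  have := hA (vecMulVec v (Pi.single l 1)) (by rw [mul_vecMulVec, hv, zero_vecMulVec])
  rw [mul_vecMulVec, trace_vecMulVec, dotProduct_single_one, mulVec_transpose] at this
  rwa [dotProduct_comm]

section SingularValues

variable {ι κ : Type*} [Fintype κ] (Φ : Matrix κ ι ℝ)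

lemma isHermitian_transpose_mul_self : (Φᵀ * Φ).IsHermitian :=
  isHermitian_conjTranspose_mul_self Φ

variable [Fintype ι]

def positiveSingularValues : Set ℝ :=
  {s : ℝ | 0 < s ∧ ∃ v : ι → ℝ, v ≠ 0 ∧ (Φᵀ * Φ) *ᵥ v = s ^ 2 • v}

noncomputable def minSingularValue : ℝ := sInf (positiveSingularValues Φ)

lemma dotProduct_transpose_mul_self_mulVec (x : ι → ℝ) :
    x ⬝ᵥ ((Φᵀ * Φ) *ᵥ x) = (Φ *ᵥ x) ⬝ᵥ (Φ *ᵥ x) := by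
  rw [← mulVec_mulVec, dotProduct_mulVec, vecMul_transpose]

lemma minSingularValue_nonneg : 0 ≤ minSingularValue Φ :=
  Real.sInf_nonneg fun _ hs => hs.1.le

variable [DecidableEq ι]

lemma sqrt_eigenvalue_mem_positiveSingularValues {i : ι}
    (hi : 0 < (isHermitian_transpose_mul_self Φ).eigenvalues i) :
    √((isHermitian_transpose_mul_self Φ).eigenvalues i) ∈ positiveSingularValues Φ := by
  set hA := isHermitian_transpose_mul_self Φ
  refine ⟨Real.sqrt_pos.mpr hi, hA.eigenvectorBasis i, ?_, ?_⟩
  · exact (WithLp.ofLp_eq_zero 2).ne.2 (hA.eigenvectorBasis.orthonormal.ne_zero i)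
  · rw [Real.sq_sqrt hi.le, hA.mulVec_eigenvectorBasis]

lemma minSingularValue_sq_le_eigenvalue {i : ι}
    (hi : 0 < (isHermitian_transpose_mul_self Φ).eigenvalues i) :
    minSingularValue Φ ^ 2 ≤ (isHermitian_transpose_mul_self Φ).eigenvalues i := by
  have hle := csInf_le ⟨0, fun _ hs => hs.1.le⟩ (sqrt_eigenvalue_mem_positiveSingularValues Φ hi)
  calc minSingularValue Φ ^ 2 ≤ √((isHermitian_transpose_mul_self Φ).eigenvalues i) ^ 2 :=
        pow_le_pow_left₀ (minSingularValue_nonneg Φ) hle 2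
    _ = _ := Real.sq_sqrt hi.le

lemma minSingularValue_pos (hΦ : Φ ≠ 0) : 0 < minSingularValue Φ := by
  set hA := isHermitian_transpose_mul_self Φ
  have hfin : (positiveSingularValues Φ).Finite := by
    refine ((Set.finite_range hA.eigenvalues).image Real.sqrt).subset ?_
    rintro s ⟨hs, v, hv, hAv⟩
    obtain ⟨i, hi⟩ := hA.mem_range_eigenvalues_of_mulVec_eq_smul hv hAv
    exact ⟨hA.eigenvalues i, ⟨i, rfl⟩, by rw [hi, Real.sqrt_sq hs.le]⟩
  obtain ⟨i, hi⟩ : ∃ i, hA.eigenvalues i ≠ 0 := by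
    by_contra! h
    exact hΦ (conjTranspose_mul_self_eq_zero.mp ((hA.eigenvalues_eq_zero_iff).mp (funext h)))
  have hpos : 0 < hA.eigenvalues i :=
    ((posSemidef_conjTranspose_mul_self Φ).eigenvalues_nonneg i).lt_of_ne' hi
  exact ((Set.nonempty_of_mem (sqrt_eigenvalue_mem_positiveSingularValues Φ hpos)).csInf_mem
    hfin).1

lemma minSingularValue_sq_mul_dotProduct_self_le {x : ι → ℝ}
    (hx : ∀ v, Φ *ᵥ v = 0 → x ⬝ᵥ v = 0) :
    minSingularValue Φ ^ 2 * (x ⬝ᵥ x) ≤ (Φ *ᵥ x) ⬝ᵥ (Φ *ᵥ x) := by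
  set hA := isHermitian_transpose_mul_self Φ
  rw [hA.eigenvectorBasis.dotProduct_self_eq_sum, Finset.mul_sum,
    ← dotProduct_transpose_mul_self_mulVec, hA.dotProduct_mulVec_self_eq_sum]
  refine Finset.sum_le_sum fun i _ => ?_
  have hnonneg : 0 ≤ hA.eigenvalues i :=
    (posSemidef_conjTranspose_mul_self Φ).eigenvalues_nonneg i
  rcases hnonneg.lt_or_eq with hi | hi
  · exact mul_le_mul_of_nonneg_right (minSingularValue_sq_le_eigenvalue Φ hi) (sq_nonneg _)
  · have hker : Φ *ᵥ hA.eigenvectorBasis i = 0 := by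
      rw [← conjTranspose_mul_self_mulVec_eq_zero]
      exact (hA.mulVec_eigenvectorBasis i).trans (by rw [← hi, zero_smul])
    have hc : hA.eigenvectorBasis i ⬝ᵥ x = 0 := by rw [dotProduct_comm]; exact hx _ hker
    simp [hc]

end SingularValues

section Frobenius

attribute [local instance] Matrix.frobeniusNormedAddCommGroup

variable {a b c : ℕ}

lemma frob_eq_norm (A : Matrix (Fin a) (Fin b) ℝ) : frob A = ‖A‖ := by
  simp only [frob, frobenius_norm_def, Real.norm_eq_abs, Real.rpow_two, sq_abs,
    Real.sqrt_eq_rpow]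

lemma frob_nonneg (A : Matrix (Fin a) (Fin b) ℝ) : 0 ≤ frob A :=
  Real.sqrt_nonneg _

lemma frob_le_add_frob_sub (A B : Matrix (Fin a) (Fin b) ℝ) :
    frob B ≤ frob A + frob (A - B) := by
  simpa only [frob_eq_norm, sub_sub_cancel] using norm_sub_le A (A - B)

lemma frob_sq_eq_sum_col (A : Matrix (Fin a) (Fin b) ℝ) : frob A ^ 2 = ∑ l, Aᵀ l ⬝ᵥ Aᵀ l := by
  rw [frob, Real.sq_sqrt (by positivity), Finset.sum_comm]
  simp [dotProduct, sq]

lemma minSingularValue_mul_frob_le {Φ : Matrix (Fin c) (Fin a) ℝ} {A : Matrix (Fin a) (Fin b) ℝ}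
    (hA : ∀ W : Matrix (Fin a) (Fin b) ℝ, Φ * W = 0 → trace (Aᵀ * W) = 0) :
    minSingularValue Φ * frob A ≤ frob (Φ * A) := by
  have hsq : (minSingularValue Φ * frob A) ^ 2 ≤ frob (Φ * A) ^ 2 := by
    rw [mul_pow, frob_sq_eq_sum_col, frob_sq_eq_sum_col, Finset.mul_sum]
    exact Finset.sum_le_sum fun l _ =>
      minSingularValue_sq_mul_dotProduct_self_le Φ fun _ =>
        transpose_dotProduct_eq_zero_of_trace_mul_eq_zero hA l
  exact (pow_le_pow_iff_left₀ (mul_nonneg (minSingularValue_nonneg Φ) (frob_nonneg A))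
    (frob_nonneg _) two_ne_zero).mp hsq

end Frobenius

theorem stmt_18_general (m n L : ℕ)
    (Φ : Matrix (Fin m) (Fin n) ℝ) (hΦ : Φ ≠ 0)
    (Y : Matrix (Fin m) (Fin L) ℝ)
    (σmin : ℝ)
    (hσ : σmin = sInf {s : ℝ | 0 < s ∧
      ∃ v : Fin n → ℝ, v ≠ 0 ∧ (Φ.transpose * Φ).mulVec v = (s ^ 2) • v})
    (X XR : Matrix (Fin n) (Fin L) ℝ)
    (hobj : frob (Y - Φ * X) ≤ frob Y)
    (hXR1 : Φ * (X - XR) = 0)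
    (hXR2 : ∀ W : Matrix (Fin n) (Fin L) ℝ, Φ * W = 0 → Matrix.trace (XR.transpose * W) = 0) :
    frob XR ≤ 2 * σmin⁻¹ * frob Y := by
  change σmin = minSingularValue Φ at hσ
  subst hσ
  have hΦXR : Φ * XR = Φ * X := by
    rw [Matrix.mul_sub, sub_eq_zero] at hXR1
    exact hXR1.symm
  have hΦX : frob (Φ * X) ≤ 2 * frob Y := by linarith [frob_le_add_frob_sub Y (Φ * X)]
  have hXR : minSingularValue Φ * frob XR ≤ frob (Φ * X) :=
    hΦXR ▸ minSingularValue_mul_frob_le hXR2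
  calc frob XR ≤ (2 * frob Y) / minSingularValue Φ := by
        rw [le_div_iff₀' (minSingularValue_pos Φ hΦ)]
        linarith
    _ = 2 * (minSingularValue Φ)⁻¹ * frob Y := by ring

theorem stmt_18 (m n L k p : ℕ) (hm : 0 < m) (hn : 0 < n) (hL : 0 < L)
    (hk : 0 < k) (hp : 0 < p)
    (Φ : Matrix (Fin m) (Fin n) ℝ) (hΦ : Φ ≠ 0)
    (Y : Matrix (Fin m) (Fin L) ℝ)
    (σmin : ℝ)
    (hσ : σmin = sInf {s : ℝ | 0 < s ∧
      ∃ v : Fin n → ℝ, v ≠ 0 ∧ (Φ.transpose * Φ).mulVec v = (s ^ 2) • v})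
    (X XR : Matrix (Fin n) (Fin L) ℝ)
    (hX : X ∈ colSparse n L k ∩ rowSparse n L p)
    (hobj : frob (Y - Φ * X) ≤ frob Y)
    (hXR1 : Φ * (X - XR) = 0)
    (hXR2 : ∀ W : Matrix (Fin n) (Fin L) ℝ, Φ * W = 0 → Matrix.trace (XR.transpose * W) = 0) :
    frob XR ≤ 2 * σmin⁻¹ * frob Y :=
  stmt_18_general m n L Φ hΦ Y σmin hσ X XR hobj hXR1 hXR2
end
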